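/- arXiv:2409.18970 — 4 statements merged into one kernel-verified Lean document; each statement's English description precedes it below -/
import Mathlib

section
/- For every strictly positive pmf r on Z k, the ELBO of the mean-field family obtained from q by replacing its k-th factor with r is at most the ELBO of the family obtained by replacing the k-th factor with the CAVI update q*_k; that is, the mean-field factor q_k(z_k) ∝ exp(E_{−k}[log p(z_k, z_{−k}, x)]) maximizes the ELBO with the other factors held fixed. -/
open Finset

variable {ι : Type*} {Z : ι → Type*}

/-- The ELBO of a mean-field family `q` for joint density `p`. -/
noncomputable def meanFieldELBO [Fintype ι] [DecidableEq ι] [∀ i, Fintype (Z i)]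
    (p : (∀ i, Z i) → ℝ) (q : ∀ i, Z i → ℝ) : ℝ :=
  ∑ z : ∀ i, Z i, (∏ i, q i (z i)) * (Real.log (p z) - ∑ i, Real.log (q i (z i)))

/-- `E₋ₖ(y)`: the expectation, over the coordinates other than `k` (distributed
according to the factors `q i`, `i ≠ k`), of `log p` of the configuration equal to `y`
at coordinate `k`. -/
noncomputable def Eminus [Fintype ι] [DecidableEq ι] [∀ i, Fintype (Z i)]
    (p : (∀ i, Z i) → ℝ) (q : ∀ i, Z i → ℝ) (k : ι) (y : Z k) : ℝ :=
  ∑ w : ∀ i : {i : ι // i ≠ k}, Z i, (∏ i : {i : ι // i ≠ k}, q i (w i)) *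
    Real.log (p (fun i => if h : i = k then h.symm ▸ y else w ⟨i, h⟩))

/-- The CAVI update at coordinate `k`: the pmf proportional to `exp (E₋ₖ ·)`. -/
noncomputable def caviUpdate [Fintype ι] [DecidableEq ι] [∀ i, Fintype (Z i)]
    (p : (∀ i, Z i) → ℝ) (q : ∀ i, Z i → ℝ) (k : ι) (y : Z k) : ℝ :=
  Real.exp (Eminus p q k y) / ∑ y' : Z k, Real.exp (Eminus p q k y')


/-! The ELBO, viewed as a function of the `k`-th factor `s` alone, is
`∑ y, s y * (E₋ₖ(y) - log (s y))` plus a constant (the contribution of the other factors).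
By Jensen's inequality for `log`, this Gibbs functional never exceeds `log ∑ y, exp (E₋ₖ(y))`,
and the softmax of `E₋ₖ`, which is the CAVI update, attains that value. -/

open Real

section Softmax

variable {α : Type*} [Fintype α]

theorem sum_mul_sub_log_le_log_sum_exp (f s : α → ℝ) (hs : ∀ a, 0 < s a)
    (hs1 : ∑ a, s a = 1) :
    ∑ a, s a * (f a - log (s a)) ≤ log (∑ a, exp (f a)) := by
  have jensen := strictConcaveOn_log_Ioi.concaveOn.le_map_sum (t := univ) (w := s)
    (p := fun a => exp (f a) / s a) (fun a _ => (hs a).le) hs1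
    (fun a _ => Set.mem_Ioi.2 (div_pos (exp_pos _) (hs a)))
  calc ∑ a, s a * (f a - log (s a)) = ∑ a, s a • log (exp (f a) / s a) :=
        sum_congr rfl fun a _ => by rw [log_div (exp_ne_zero _) (hs a).ne', log_exp, smul_eq_mul]
    _ ≤ log (∑ a, s a • (exp (f a) / s a)) := jensen
    _ = log (∑ a, exp (f a)) := by
        congr 1
        exact sum_congr rfl fun a _ => by rw [smul_eq_mul, mul_div_cancel₀ _ (hs a).ne']

noncomputable def softmax (f : α → ℝ) (a : α) : ℝ :=
  exp (f a) / ∑ b, exp (f b)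

variable [Nonempty α]

theorem sum_exp_pos (f : α → ℝ) : 0 < ∑ a, exp (f a) :=
  sum_pos (fun _ _ => exp_pos _) univ_nonempty

theorem sum_softmax (f : α → ℝ) : ∑ a, softmax f a = 1 := by
  simp only [softmax, ← sum_div]
  exact div_self (sum_exp_pos f).ne'

theorem sum_softmax_mul_sub_log (f : α → ℝ) :
    ∑ a, softmax f a * (f a - log (softmax f a)) = log (∑ a, exp (f a)) := by
  have hterm : ∀ a, softmax f a * (f a - log (softmax f a)) =
      softmax f a * log (∑ b, exp (f b)) := fun a => by
    rw [softmax, log_div (exp_ne_zero _) (sum_exp_pos f).ne', log_exp, sub_sub_cancel]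
  rw [sum_congr rfl fun a _ => hterm a, ← sum_mul, sum_softmax, one_mul]

end Softmax

section MeanField

variable [Fintype ι] [DecidableEq ι]

@[to_additive]
theorem prod_piSplitAt_symm {M : Type*} [CommMonoid M] (g : ∀ i, Z i → M) (k : ι) (y : Z k)
    (w : ∀ i : {i // i ≠ k}, Z i) :
    ∏ i, g i ((Equiv.piSplitAt k Z).symm (y, w) i) = g k y * ∏ i : {i // i ≠ k}, g i (w i) := by
  rw [Fintype.prod_eq_mul_prod_subtype_ne _ k]
  congr 1
  · simp
  · exact Fintype.prod_congr _ _ fun i => by simp [Equiv.piSplitAt, i.2]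

variable [∀ i, Fintype (Z i)]

theorem caviUpdate_eq_softmax (p : (∀ i, Z i) → ℝ) (q : ∀ i, Z i → ℝ) (k : ι) :
    caviUpdate p q k = softmax (Eminus p q k) :=
  rfl

theorem meanFieldELBO_update (p : (∀ i, Z i) → ℝ) (q : ∀ i, Z i → ℝ)
    (hq1 : ∀ i, ∑ y, q i y = 1) (k : ι) (s : Z k → ℝ) (hs1 : ∑ y, s y = 1) :
    meanFieldELBO p (Function.update q k s) =
      ∑ y, s y * (Eminus p q k y - log (s y)) -
        ∑ w : ∀ i : {i // i ≠ k}, Z i, (∏ i : {i // i ≠ k}, q i (w i)) *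
          ∑ i : {i // i ≠ k}, log (q i (w i)) := by
  set Q : (∀ i : {i // i ≠ k}, Z i) → ℝ := fun w => ∏ i : {i // i ≠ k}, q i (w i)
  set L : (∀ i : {i // i ≠ k}, Z i) → ℝ := fun w => ∑ i : {i // i ≠ k}, log (q i (w i))
  have hQ1 : ∑ w, Q w = 1 := by
    rw [← Fintype.prod_sum (fun (i : {i // i ≠ k}) (y : Z i) => q i y)]
    exact Fintype.prod_eq_one _ fun i => hq1 i
  have hupdate : ∀ i : {i // i ≠ k}, Function.update q k s i = q i := fun i =>
    Function.update_of_ne i.2 _ _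
  -- the configuration `z_{w,y}` spelled out in `Eminus` is `(Equiv.piSplitAt k Z).symm (y, w)`
  have hEminus : ∀ y, Eminus p q k y = ∑ w, Q w * log (p ((Equiv.piSplitAt k Z).symm (y, w))) :=
    fun y => rfl
  calc meanFieldELBO p (Function.update q k s)
      = ∑ y, ∑ w, s y * Q w *
          (log (p ((Equiv.piSplitAt k Z).symm (y, w))) - (log (s y) + L w)) := by
        rw [meanFieldELBO, ← (Equiv.piSplitAt k Z).symm.sum_comp, Fintype.sum_prod_type]
        simp only [prod_piSplitAt_symm (Function.update q k s),
          sum_piSplitAt_symm fun i v => log (Function.update q k s i v),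
          Function.update_self, hupdate]
        rfl
    _ = ∑ y, (s y * Eminus p q k y - s y * log (s y) * ∑ w, Q w - s y * ∑ w, Q w * L w) := by
        refine sum_congr rfl fun y _ => ?_
        rw [hEminus, mul_sum, mul_sum, mul_sum, ← sum_sub_distrib, ← sum_sub_distrib]
        exact sum_congr rfl fun w _ => by ring
    _ = _ := by
        rw [hQ1]
        simp only [mul_one, sum_sub_distrib, ← sum_mul, hs1, one_mul, mul_sub, Q, L]

end MeanField

theorem caviUpdate_maximizes_elbo_general [Fintype ι] [DecidableEq ι]
    [∀ i, Fintype (Z i)]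
    (p : (∀ i, Z i) → ℝ)
    (q : ∀ i, Z i → ℝ) (hq1 : ∀ i, ∑ y, q i y = 1)
    (k : ι) (r : Z k → ℝ) (hr : ∀ y, 0 < r y) (hr1 : ∑ y, r y = 1) :
    meanFieldELBO p (Function.update q k r) ≤
      meanFieldELBO p (Function.update q k (caviUpdate p q k)) := by
  obtain ⟨y₀, -, -⟩ := exists_ne_zero_of_sum_ne_zero (hr1.trans_ne one_ne_zero)
  have : Nonempty (Z k) := ⟨y₀⟩
  rw [caviUpdate_eq_softmax, meanFieldELBO_update p q hq1 k r hr1,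
    meanFieldELBO_update p q hq1 k _ (sum_softmax _), sum_softmax_mul_sub_log]
  exact sub_le_sub_right (sum_mul_sub_log_le_log_sum_exp _ r hr hr1) _

/-- With the other factors held fixed, the CAVI update maximizes the ELBO over all
strictly positive pmf's at coordinate `k`. -/
theorem caviUpdate_maximizes_elbo [Fintype ι] [DecidableEq ι] [Nonempty ι]
    [∀ i, Fintype (Z i)] [∀ i, Nonempty (Z i)]
    (p : (∀ i, Z i) → ℝ) (hp : ∀ z, 0 < p z)
    (q : ∀ i, Z i → ℝ) (hq : ∀ i y, 0 < q i y) (hq1 : ∀ i, ∑ y, q i y = 1)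
    (k : ι) (r : Z k → ℝ) (hr : ∀ y, 0 < r y) (hr1 : ∑ y, r y = 1) :
    meanFieldELBO p (Function.update q k r) ≤
      meanFieldELBO p (Function.update q k (caviUpdate p q k)) :=
  caviUpdate_maximizes_elbo_general p q hq1 k r hr hr1
end

section
/- The CAVI update is the unique maximizer: the ELBO of the mean-field family obtained from q by replacing its k-th factor with a strictly positive pmf r equals the ELBO of the family with k-th factor q*_k if and only if r y = q*_k(y) for all y ∈ Z k. -/
open Finset

variable {ι : Type*} {Z : ι → Type*}

section Aux

variable [Fintype ι] [DecidableEq ι] [∀ i, Fintype (Z i)]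

/-- Reconstruction of a configuration from a value at `k` and the other coordinates. -/
private def zof (k : ι) (y : Z k) (w : ∀ i : {i : ι // i ≠ k}, Z i) : ∀ i, Z i :=
  fun i => if h : i = k then h.symm ▸ y else w ⟨i, h⟩

private lemma sum_split (k : ι) (f : (∀ i, Z i) → ℝ) :
    ∑ z : ∀ i, Z i, f z =
      ∑ y : Z k, ∑ w : ∀ i : {i : ι // i ≠ k}, Z i, f (zof k y w) := by
  have e : ∑ z : ∀ i, Z i, f z =
      ∑ yw : Z k × (∀ i : {i : ι // i ≠ k}, Z i), f (zof k yw.1 yw.2) := by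
    refine Fintype.sum_equiv (Equiv.piSplitAt k Z) _ _ (fun z => ?_)
    congr 1
    funext i
    simp only [zof, Equiv.piSplitAt_apply]
    split_ifs with h
    · subst h; rfl
    · rfl
  rw [e, Fintype.sum_prod_type]

private lemma prod_split (k : ι) (g : ∀ i, Z i → ℝ) (y : Z k)
    (w : ∀ i : {i : ι // i ≠ k}, Z i) :
    ∏ i, g i (zof k y w i) = g k y * ∏ i : {i : ι // i ≠ k}, g i (w i) := by
  rw [← Finset.mul_prod_erase univ (fun i => g i (zof k y w i)) (mem_univ k)]
  congr 1
  · simp [zof]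
  · rw [Finset.prod_subtype (p := fun i => i ≠ k) (univ.erase k) (fun i => by simp)
      (fun i => g i (zof k y w i))]
    refine Fintype.prod_congr _ _ (fun i => ?_)
    simp [zof, i.prop]

private lemma sum_split_fun (k : ι) (g : ∀ i, Z i → ℝ) (y : Z k)
    (w : ∀ i : {i : ι // i ≠ k}, Z i) :
    ∑ i, g i (zof k y w i) = g k y + ∑ i : {i : ι // i ≠ k}, g i (w i) := by
  rw [← Finset.add_sum_erase univ (fun i => g i (zof k y w i)) (mem_univ k)]
  congr 1
  · simp [zof]
  · rw [Finset.sum_subtype (p := fun i => i ≠ k) (univ.erase k) (fun i => by simp)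
      (fun i => g i (zof k y w i))]
    refine Fintype.sum_congr _ _ (fun i => ?_)
    simp [zof, i.prop]

private lemma elbo_decomp (p : (∀ i, Z i) → ℝ) (q : ∀ i, Z i → ℝ)
    (hq1 : ∀ i, ∑ y, q i y = 1) (k : ι) (s : Z k → ℝ) (hs1 : ∑ y, s y = 1) :
    meanFieldELBO p (Function.update q k s) =
      (∑ y, s y * (Eminus p q k y - Real.log (s y))) -
        ∑ w : ∀ i : {i : ι // i ≠ k}, Z i,
          (∏ i : {i : ι // i ≠ k}, q i (w i)) *
            (∑ i : {i : ι // i ≠ k}, Real.log (q i (w i))) := by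
  set P : (∀ i : {i : ι // i ≠ k}, Z i) → ℝ :=
    fun w => ∏ i : {i : ι // i ≠ k}, q i (w i) with hP
  have hPsum : ∑ w : ∀ i : {i : ι // i ≠ k}, Z i, P w = 1 := by
    have h := Finset.prod_univ_sum (fun i : {i : ι // i ≠ k} => (univ : Finset (Z i)))
      (fun i y => q i y)
    rw [Fintype.piFinset_univ] at h
    rw [hP, ← h]
    exact Finset.prod_eq_one fun i _ => hq1 i
  have hprod : ∀ (y : Z k) w,
      ∏ i, Function.update q k s i (zof k y w i) = s y * P w := by
    intro y w
    rw [prod_split k (fun i => Function.update q k s i) y w]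
    congr 1
    · simp
    · exact Fintype.prod_congr _ _ fun i => by rw [Function.update_of_ne i.prop]
  have hlog : ∀ (y : Z k) w,
      ∑ i, Real.log (Function.update q k s i (zof k y w i)) =
        Real.log (s y) + ∑ i : {i : ι // i ≠ k}, Real.log (q i (w i)) := by
    intro y w
    rw [sum_split_fun k (fun i z => Real.log (Function.update q k s i z)) y w]
    congr 1
    · simp
    · exact Fintype.sum_congr _ _ fun i => by rw [Function.update_of_ne i.prop]
  set L : (∀ i : {i : ι // i ≠ k}, Z i) → ℝ :=
    fun w => ∑ i : {i : ι // i ≠ k}, Real.log (q i (w i)) with hL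
  set D : ℝ := ∑ w : ∀ i : {i : ι // i ≠ k}, Z i, P w * L w with hD
  calc meanFieldELBO p (Function.update q k s)
      = ∑ y : Z k, ∑ w : ∀ i : {i : ι // i ≠ k}, Z i,
          s y * (P w * Real.log (p (zof k y w)) - P w * Real.log (s y) - P w * L w) := by
        rw [meanFieldELBO, sum_split k]
        refine Finset.sum_congr rfl fun y _ => Finset.sum_congr rfl fun w _ => ?_
        rw [hprod, hlog]; ring
    _ = ∑ y : Z k, s y * (Eminus p q k y - Real.log (s y) - D) := by
        refine Finset.sum_congr rfl fun y _ => ?_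
        have hEm : Eminus p q k y =
            ∑ w : ∀ i : {i : ι // i ≠ k}, Z i, P w * Real.log (p (zof k y w)) := rfl
        have hB : ∑ w : ∀ i : {i : ι // i ≠ k}, Z i, P w * Real.log (s y) =
            Real.log (s y) := by rw [← Finset.sum_mul, hPsum, one_mul]
        rw [← Finset.mul_sum, Finset.sum_sub_distrib, Finset.sum_sub_distrib, hB, hEm, hD]
    _ = (∑ y, s y * (Eminus p q k y - Real.log (s y))) - D := by
        have : ∀ y : Z k, s y * (Eminus p q k y - Real.log (s y) - D) =
            s y * (Eminus p q k y - Real.log (s y)) - s y * D := fun y => by ring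
        rw [Finset.sum_congr rfl fun y _ => this y, Finset.sum_sub_distrib,
          ← Finset.sum_mul, hs1, one_mul]

private lemma gibbs (p : (∀ i, Z i) → ℝ) (q : ∀ i, Z i → ℝ) (k : ι) [Nonempty (Z k)]
    (s : Z k → ℝ) (hs : ∀ y, 0 < s y) (hs1 : ∑ y, s y = 1) :
    (∑ y, s y * (Eminus p q k y - Real.log (s y))) =
      Real.log (∑ y' : Z k, Real.exp (Eminus p q k y')) ↔
      ∀ y, s y = caviUpdate p q k y := by
  set E : Z k → ℝ := Eminus p q k with hE
  set S₀ : ℝ := ∑ y' : Z k, Real.exp (E y') with hS₀def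
  have hS₀ : 0 < S₀ := Finset.sum_pos (fun y _ => Real.exp_pos _) univ_nonempty
  have jensen := strictConcaveOn_log_Ioi.map_sum_eq_iff (t := univ) (w := s)
    (p := fun y => Real.exp (E y) / s y) (fun y _ => hs y) hs1
    (fun y _ => Set.mem_Ioi.2 (div_pos (Real.exp_pos _) (hs y)))
  simp only [smul_eq_mul] at jensen
  have h1 : ∑ y : Z k, s y * (Real.exp (E y) / s y) = S₀ :=
    Finset.sum_congr rfl fun y _ => by
      rw [mul_comm, div_mul_cancel₀ _ (hs y).ne']
  rw [h1] at jensen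
  have h2 : ∀ y : Z k, Real.log (Real.exp (E y) / s y) = E y - Real.log (s y) :=
    fun y => by rw [Real.log_div (Real.exp_ne_zero _) (hs y).ne', Real.log_exp]
  constructor
  · intro h y
    have hy := jensen.mp (by simp only [h2]; exact h.symm) y (mem_univ y)
    rw [div_eq_iff (hs y).ne'] at hy
    show s y = Real.exp (E y) / S₀
    rw [hy, mul_comm, mul_div_assoc, div_self hS₀.ne', mul_one]
  · intro h
    have hall : ∀ j ∈ univ, Real.exp (E j) / s j = S₀ := by
      intro j _
      have hj : s j = Real.exp (E j) / S₀ := h j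
      rw [hj, div_div_eq_mul_div, mul_comm, mul_div_assoc,
        div_self (Real.exp_ne_zero _), mul_one]
    have := jensen.mpr hall
    simp only [h2] at this
    exact this.symm

end Aux

/-- The CAVI update is the unique maximizer of the ELBO with the other factors held
fixed: replacing the `k`-th factor by a strictly positive pmf `r` attains the ELBO of
the CAVI update iff `r` equals the CAVI update. -/
theorem caviUpdate_unique_maximizer [Fintype ι] [DecidableEq ι] [Nonempty ι]
    [∀ i, Fintype (Z i)] [∀ i, Nonempty (Z i)]
    (p : (∀ i, Z i) → ℝ) (hp : ∀ z, 0 < p z)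
    (q : ∀ i, Z i → ℝ) (hq : ∀ i y, 0 < q i y) (hq1 : ∀ i, ∑ y, q i y = 1)
    (k : ι) (r : Z k → ℝ) (hr : ∀ y, 0 < r y) (hr1 : ∑ y, r y = 1) :
    meanFieldELBO p (Function.update q k r) =
      meanFieldELBO p (Function.update q k (caviUpdate p q k)) ↔
      ∀ y, r y = caviUpdate p q k y := by
  set S₀ : ℝ := ∑ y' : Z k, Real.exp (Eminus p q k y') with hS₀def
  have hS₀ : 0 < S₀ := Finset.sum_pos (fun y _ => Real.exp_pos _) univ_nonempty
  have hc : ∀ y, 0 < caviUpdate p q k y := fun y =>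
    div_pos (Real.exp_pos _) hS₀
  have hc1 : ∑ y, caviUpdate p q k y = 1 := by
    unfold caviUpdate
    rw [← Finset.sum_div]
    exact div_self hS₀.ne'
  have hgc : (∑ y, caviUpdate p q k y * (Eminus p q k y - Real.log (caviUpdate p q k y))) =
      Real.log S₀ :=
    (gibbs p q k _ hc hc1).mpr fun y => rfl
  rw [elbo_decomp p q hq1 k r hr1, elbo_decomp p q hq1 k _ hc1, sub_left_inj, hgc]
  exact gibbs p q k r hr hr1
end

section
/- The conditional expectation of Y given the σ-algebra generated by X satisfies 𝔼[Y | σ(X)] = Ȳ + (Σ_xy/Σ_xx)·(X − X̄) ℙ-almost everywhere; that is, the conditional expectation condExp (MeasurableSpace.comap X) ℙ Y is almost everywhere equal to the function ω ↦ Ȳ + (Σ_xy/Σ_xx)·(X ω − X̄). -/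
/-!
With `c = Σxy / Σxx`, the pair `(X, Y - c X)` is Gaussian, and `X ± (Y - c X)` have the same
variance, so `X` and `Y - c X` are uncorrelated, hence independent. Writing
`Y = c X + (Y - c X)`, the first summand is `σ(X)`-measurable and the second is independent of
`σ(X)`, so `𝔼[Y | σ(X)] = c X + 𝔼[Y - c X] = c X + Ȳ - c X̄`.
-/

open MeasureTheory ProbabilityTheory

namespace ProbabilityTheory

variable {Ω : Type*} {mΩ : MeasurableSpace Ω} {P : Measure Ω}

lemma hasGaussianLaw_prodMk_of_map_linear_eq_gaussianReal {X Y : Ω → ℝ}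
    (hX : AEMeasurable X P) (hY : AEMeasurable Y P)
    (h : ∀ a b : ℝ, ∃ (m : ℝ) (v : NNReal),
      P.map (fun ω ↦ a * X ω + b * Y ω) = gaussianReal m v) :
    HasGaussianLaw (fun ω ↦ (X ω, Y ω)) P := by
  refine ⟨isGaussian_of_map_eq_gaussianReal fun L ↦ ?_⟩
  obtain ⟨m, v, hmv⟩ := h (L (1, 0)) (L (0, 1))
  refine ⟨m, v, ?_⟩
  rw [AEMeasurable.map_map_of_aemeasurable L.continuous.aemeasurable (hX.prodMk hY), ← hmv]
  congr 1
  ext ω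
  have hxy : (X ω, Y ω) = X ω • ((1 : ℝ), (0 : ℝ)) + Y ω • ((0 : ℝ), (1 : ℝ)) := by simp
  rw [Function.comp_apply, hxy, L.map_add, L.map_smul, L.map_smul, smul_eq_mul, smul_eq_mul,
    mul_comm, mul_comm (Y ω)]

lemma covariance_eq_zero_of_variance_add_eq_variance_sub [IsFiniteMeasure P] {X Y : Ω → ℝ}
    (hX : MemLp X 2 P) (hY : MemLp Y 2 P) (h : Var[X + Y; P] = Var[X - Y; P]) :
    cov[X, Y; P] = 0 := by
  rw [variance_add hX hY, variance_sub hX hY] at h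
  linarith

lemma condExp_comp_add_of_indepFun [IsFiniteMeasure P] {β : Type*} [mβ : MeasurableSpace β]
    {X : Ω → β} {Z : Ω → ℝ} {f : β → ℝ} (hX : Measurable X) (hZ : Measurable Z)
    (hf : Measurable f) (hfX : Integrable (fun ω ↦ f (X ω)) P) (hZi : Integrable Z P)
    (hXZ : IndepFun X Z P) :
    P[fun ω ↦ f (X ω) + Z ω | MeasurableSpace.comap X mβ]
      =ᵐ[P] fun ω ↦ f (X ω) + P[Z] := by
  have hfX_meas : StronglyMeasurable[MeasurableSpace.comap X mβ] (fun ω ↦ f (X ω)) :=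
    (hf.comp (comap_measurable X)).stronglyMeasurable
  have hZ_indep : P[Z | MeasurableSpace.comap X mβ] =ᵐ[P] fun _ ↦ P[Z] :=
    condExp_indep_eq hZ.comap_le hX.comap_le (comap_measurable Z).stronglyMeasurable
      ((IndepFun_iff_Indep Z X P).mp hXZ.symm)
  filter_upwards [condExp_add hfX hZi (MeasurableSpace.comap X mβ), hZ_indep]
    with ω hadd hconst
  refine hadd.trans ?_
  rw [Pi.add_apply, hconst, condExp_of_stronglyMeasurable hX.comap_le hfX_meas hfX]

lemma integral_eq_of_map_eq_gaussianReal {f : Ω → ℝ} {m : ℝ} {v : NNReal}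
    (hf : AEMeasurable f P) (h : P.map f = gaussianReal m v) : P[f] = m := by
  rw [HasLaw.integral_eq ⟨hf, h⟩, integral_id_gaussianReal]

lemma variance_eq_of_map_eq_gaussianReal {f : Ω → ℝ} {m : ℝ} {v : NNReal}
    (hf : AEMeasurable f P) (h : P.map f = gaussianReal m v) : Var[f; P] = v := by
  rw [HasLaw.variance_eq ⟨hf, h⟩, variance_id_gaussianReal]

section BivariateGaussian

variable {X Y : Ω → ℝ} {Xbar Ybar Sxx Sxy Syy : ℝ}

lemma map_add_mul_sub_mul_eq_gaussianReal
    (hGauss : ∀ a b : ℝ, P.map (fun ω ↦ a * X ω + b * Y ω) =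
      gaussianReal (a * Xbar + b * Ybar) ((a ^ 2 * Sxx + 2 * a * b * Sxy + b ^ 2 * Syy).toNNReal))
    (c a b : ℝ) :
    P.map (fun ω ↦ a * X ω + b * (Y ω - c * X ω)) =
      gaussianReal ((a - b * c) * Xbar + b * Ybar)
        (((a - b * c) ^ 2 * Sxx + 2 * (a - b * c) * b * Sxy + b ^ 2 * Syy).toNNReal) := by
  rw [← hGauss]
  congr 1
  ext ω
  ring

lemma hasGaussianLaw_prodMk_sub_mul (hX : AEMeasurable X P) (hY : AEMeasurable Y P)
    (hGauss : ∀ a b : ℝ, P.map (fun ω ↦ a * X ω + b * Y ω) =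
      gaussianReal (a * Xbar + b * Ybar) ((a ^ 2 * Sxx + 2 * a * b * Sxy + b ^ 2 * Syy).toNNReal))
    (c : ℝ) :
    HasGaussianLaw (fun ω ↦ (X ω, Y ω - c * X ω)) P :=
  hasGaussianLaw_prodMk_of_map_linear_eq_gaussianReal hX (hY.sub (hX.const_mul c))
    fun a b ↦ ⟨_, _, map_add_mul_sub_mul_eq_gaussianReal hGauss c a b⟩

lemma covariance_sub_div_mul_eq_zero [IsFiniteMeasure P] (hX : AEMeasurable X P)
    (hY : AEMeasurable Y P) (hSxx : Sxx ≠ 0)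
    (hGauss : ∀ a b : ℝ, P.map (fun ω ↦ a * X ω + b * Y ω) =
      gaussianReal (a * Xbar + b * Ybar) ((a ^ 2 * Sxx + 2 * a * b * Sxy + b ^ 2 * Syy).toNNReal)) :
    cov[X, fun ω ↦ Y ω - Sxy / Sxx * X ω; P] = 0 := by
  have hXZ := hasGaussianLaw_prodMk_sub_mul hX hY hGauss (Sxy / Sxx)
  refine covariance_eq_zero_of_variance_add_eq_variance_sub hXZ.fst.memLp_two hXZ.snd.memLp_two ?_
  have hvar (b : ℝ) := variance_eq_of_map_eq_gaussianReal (by fun_prop)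
    (map_add_mul_sub_mul_eq_gaussianReal hGauss (Sxy / Sxx) 1 b)
  have hplus : (X + fun ω ↦ Y ω - Sxy / Sxx * X ω) =
      fun ω ↦ 1 * X ω + 1 * (Y ω - Sxy / Sxx * X ω) := by
    ext ω; simp only [Pi.add_apply, one_mul]
  have hminus : (X - fun ω ↦ Y ω - Sxy / Sxx * X ω) =
      fun ω ↦ 1 * X ω + (-1) * (Y ω - Sxy / Sxx * X ω) := by
    ext ω; simp only [Pi.sub_apply]; ring
  rw [hplus, hminus, hvar, hvar]
  congr 2
  field_simp
  ring

end BivariateGaussian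

end ProbabilityTheory

theorem gaussian_condExp_general
    {Ω : Type*} [m0 : MeasurableSpace Ω] (P : Measure Ω) [IsProbabilityMeasure P]
    (X Y : Ω → ℝ) (hX : Measurable X) (hY : Measurable Y)
    (Xbar Ybar Sxx Sxy Syy : ℝ)
    (hSxx : 0 < Sxx)
    (hGauss : ∀ a b : ℝ,
      Measure.map (fun ω => a * X ω + b * Y ω) P =
        gaussianReal (a * Xbar + b * Ybar)
          ((a ^ 2 * Sxx + 2 * a * b * Sxy + b ^ 2 * Syy).toNNReal)) :
    MeasureTheory.condExp (MeasurableSpace.comap X Real.measurableSpace) P Y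
      =ᵐ[P] fun ω => Ybar + (Sxy / Sxx) * (X ω - Xbar) := by
  set c := Sxy / Sxx
  set Z := fun ω ↦ Y ω - c * X ω with hZ
  have hXZ := hasGaussianLaw_prodMk_sub_mul hX.aemeasurable hY.aemeasurable hGauss c
  have hindep : IndepFun X Z P := hXZ.indepFun_of_covariance_eq_zero
    (covariance_sub_div_mul_eq_zero hX.aemeasurable hY.aemeasurable hSxx.ne' hGauss)
  have hZ_mean : P[Z] = Ybar - c * Xbar := by
    have h := map_add_mul_sub_mul_eq_gaussianReal hGauss c 0 1
    simp only [zero_mul, zero_add, one_mul, zero_sub] at h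
    rw [integral_eq_of_map_eq_gaussianReal (by fun_prop) h]
    ring
  have hY_eq : Y = fun ω ↦ c * X ω + Z ω := by
    ext ω; simp only [hZ]; ring
  rw [hY_eq]
  filter_upwards [condExp_comp_add_of_indepFun (Z := Z) (f := fun x ↦ c * x) hX
    (hY.sub (hX.const_mul c)) (measurable_const_mul c) (hXZ.fst.integrable.const_mul c)
    hXZ.snd.integrable hindep] with ω h
  rw [h, hZ_mean]
  ring

/-- For jointly Gaussian `X, Y`, the conditional expectation of `Y` given `X` is
`Ȳ + (Σxy/Σxx)(X − X̄)` almost everywhere. -/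
theorem gaussian_condExp
    {Ω : Type*} [m0 : MeasurableSpace Ω] (P : Measure Ω) [IsProbabilityMeasure P]
    (X Y : Ω → ℝ) (hX : Measurable X) (hY : Measurable Y)
    (Xbar Ybar Sxx Sxy Syy : ℝ)
    (hSxx : 0 < Sxx) (hSyy : 0 ≤ Syy) (hdet : 0 ≤ Sxx * Syy - Sxy ^ 2)
    (hGauss : ∀ a b : ℝ,
      Measure.map (fun ω => a * X ω + b * Y ω) P =
        gaussianReal (a * Xbar + b * Ybar)
          ((a ^ 2 * Sxx + 2 * a * b * Sxy + b ^ 2 * Syy).toNNReal))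
    (hYint : Integrable Y P) :
    MeasureTheory.condExp (MeasurableSpace.comap X Real.measurableSpace) P Y
      =ᵐ[P] fun ω => Ybar + (Sxy / Sxx) * (X ω - Xbar) :=
  gaussian_condExp_general (m0 := m0) P X Y hX hY Xbar Ybar Sxx Sxy Syy hSxx hGauss
end

section
/- For all real a, b > 0, ∫_{x ∈ (0,1)} (log x) · x^(a−1) · (1−x)^(b−1) dx = B(a, b) · (ψ(a) − ψ(a + b)). (This is the two-category case of the Dirichlet identity E[log θ_j] = Ψ(α̂_j) − Ψ(Σ_i α̂_i) used in the variational cluster-assignment update r_{t(k)}.) -/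
open Real

/-- The digamma function: the derivative of `log ∘ Γ`. -/
noncomputable def digamma (s : ℝ) : ℝ :=
  deriv (fun u : ℝ => Real.log (Real.Gamma u)) s

/-- The Beta function `B(a, b) = ∫_{(0,1)} x^(a−1) (1−x)^(b−1) dx`. -/
noncomputable def betaIntegral (a b : ℝ) : ℝ :=
  ∫ x in Set.Ioo (0 : ℝ) 1, x ^ (a - 1) * (1 - x) ^ (b - 1)

/-!
On `0 < t`, `t ↦ B(t, b)` agrees with `t ↦ Γ(t) Γ(b) / Γ(t + b)`, so both have the same derivative
at `a`. Differentiating the integral under the integral sign gives the left-hand side: near `a`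
the `t`-derivative `log x · x^(t-1) (1-x)^(b-1)` is dominated by a multiple of the Beta kernel
with exponent `a/2`, using `|log x| ≤ x^(-ε)/ε` on `(0, 1]`. Differentiating the Gamma quotient
gives `B(a, b) (ψ(a) - ψ(a + b))`.
-/

open MeasureTheory Set

lemma digamma_eq_deriv_Gamma_div_Gamma {s : ℝ} (hs : ∀ m : ℕ, s ≠ -m) :
    digamma s = deriv Gamma s / Gamma s :=
  ((differentiableAt_Gamma hs).hasDerivAt.log (Gamma_ne_zero hs)).deriv

lemma ne_neg_natCast_of_pos {s : ℝ} (hs : 0 < s) (m : ℕ) : s ≠ -m := by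
  have : -(m : ℝ) ≤ 0 := neg_nonpos.mpr m.cast_nonneg
  linarith

lemma ofReal_betaKernel {x : ℝ} (hx : x ∈ Icc (0 : ℝ) 1) (u v : ℝ) :
    ((x ^ (u - 1) * (1 - x) ^ (v - 1) : ℝ) : ℂ) =
      (x : ℂ) ^ ((u : ℂ) - 1) * (1 - (x : ℂ)) ^ ((v : ℂ) - 1) := by
  have h1x : 0 ≤ 1 - x := sub_nonneg.2 hx.2
  push_cast [Complex.ofReal_cpow hx.1, Complex.ofReal_cpow h1x]
  rfl

lemma ofReal_betaIntegral (u v : ℝ) :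
    (betaIntegral u v : ℂ) = Complex.betaIntegral u v := by
  rw [Complex.betaIntegral, intervalIntegral.integral_of_le zero_le_one, betaIntegral,
    ← integral_Ioc_eq_integral_Ioo]
  exact integral_ofReal.symm.trans <| setIntegral_congr_fun measurableSet_Ioc fun x hx ↦
    ofReal_betaKernel (Ioc_subset_Icc_self hx) u v

lemma integrableOn_betaKernel {u v : ℝ} (hu : 0 < u) (hv : 0 < v) :
    IntegrableOn (fun x : ℝ ↦ x ^ (u - 1) * (1 - x) ^ (v - 1)) (Ioo 0 1) := by
  have h := Complex.betaIntegral_convergent (u := u) (v := v) (by simpa) (by simpa)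
  rw [intervalIntegrable_iff_integrableOn_Ioc_of_le zero_le_one] at h
  refine (IntegrableOn.congr_fun h.re (fun x hx ↦ ?_) measurableSet_Ioc).mono_set
    Ioo_subset_Ioc_self
  simp only [← ofReal_betaKernel (Ioc_subset_Icc_self hx), RCLike.re_to_complex,
    Complex.ofReal_re]

lemma betaIntegral_eq_Gamma_mul_Gamma_div {a b : ℝ} (ha : 0 < a) (hb : 0 < b) :
    betaIntegral a b = Gamma a * Gamma b / Gamma (a + b) := by
  have h := Complex.betaIntegral_eq_Gamma_mul_div a b (by simpa) (by simpa)
  rw [← ofReal_betaIntegral, ← Complex.ofReal_add, Complex.Gamma_ofReal,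
    Complex.Gamma_ofReal, Complex.Gamma_ofReal] at h
  exact_mod_cast h

lemma abs_log_mul_rpow_le {x : ℝ} (hx0 : 0 < x) (hx1 : x ≤ 1) (s : ℝ) {ε : ℝ} (hε : 0 < ε) :
    |log x| * x ^ s ≤ ε⁻¹ * x ^ (s - ε) := by
  have hlog : |log x| ≤ ε⁻¹ * x ^ (-ε) := by
    rw [abs_of_nonpos (log_nonpos hx0.le hx1), ← log_inv, rpow_neg hx0.le, ← inv_rpow hx0.le,
      inv_mul_eq_div]
    exact log_le_rpow_div (by positivity) hε
  calc |log x| * x ^ s ≤ ε⁻¹ * x ^ (-ε) * x ^ s := by gcongr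
    _ = ε⁻¹ * x ^ (s - ε) := by rw [mul_assoc, ← rpow_add hx0, neg_add_eq_sub]

lemma norm_log_mul_betaKernel_le {x : ℝ} (hx : x ∈ Ioo (0 : ℝ) 1) {s t ε : ℝ} (hε : 0 < ε)
    (hst : s + ε ≤ t) (b : ℝ) :
    ‖log x * x ^ (t - 1) * (1 - x) ^ (b - 1)‖ ≤ ε⁻¹ * (x ^ (s - 1) * (1 - x) ^ (b - 1)) := by
  have h1x : 0 ≤ 1 - x := sub_nonneg.2 hx.2.le
  calc ‖log x * x ^ (t - 1) * (1 - x) ^ (b - 1)‖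
      = |log x| * x ^ (t - 1) * (1 - x) ^ (b - 1) := by
        rw [norm_mul, norm_mul, norm_eq_abs, norm_of_nonneg (rpow_nonneg hx.1.le _),
          norm_of_nonneg (rpow_nonneg h1x _)]
    _ ≤ ε⁻¹ * x ^ (t - 1 - ε) * (1 - x) ^ (b - 1) := by
        gcongr ?_ * _
        exact abs_log_mul_rpow_le hx.1 hx.2.le _ hε
    _ ≤ ε⁻¹ * (x ^ (s - 1) * (1 - x) ^ (b - 1)) := by
        rw [mul_assoc]
        gcongr _ * (?_ * _)
        exact rpow_le_rpow_of_exponent_ge hx.1 hx.2.le (by linarith)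

lemma hasDerivAt_betaKernel_left {x : ℝ} (hx : 0 < x) (b t : ℝ) :
    HasDerivAt (fun t ↦ x ^ (t - 1) * (1 - x) ^ (b - 1))
      (log x * x ^ (t - 1) * (1 - x) ^ (b - 1)) t := by
  refine ((((hasDerivAt_id t).sub_const 1).const_rpow hx).mul_const _).congr_deriv ?_
  simp only [id, mul_one]

lemma hasDerivAt_betaIntegral_left {a b : ℝ} (ha : 0 < a) (hb : 0 < b) :
    HasDerivAt (fun t ↦ betaIntegral t b)
      (∫ x in Ioo (0 : ℝ) 1, log x * x ^ (a - 1) * (1 - x) ^ (b - 1)) a := by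
  have hε : 0 < a / 4 := by positivity
  have h_bound : ∀ᵐ x ∂volume.restrict (Ioo (0 : ℝ) 1), ∀ t ∈ Metric.ball a (a / 4),
      ‖log x * x ^ (t - 1) * (1 - x) ^ (b - 1)‖ ≤
        (a / 4)⁻¹ * (x ^ (a / 2 - 1) * (1 - x) ^ (b - 1)) := by
    filter_upwards [ae_restrict_mem measurableSet_Ioo] with x hx t ht
    rw [Metric.mem_ball, dist_eq, abs_lt] at ht
    exact norm_log_mul_betaKernel_le hx hε (by linarith) b
  have h_diff : ∀ᵐ x ∂volume.restrict (Ioo (0 : ℝ) 1), ∀ t ∈ Metric.ball a (a / 4),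
      HasDerivAt (fun t ↦ x ^ (t - 1) * (1 - x) ^ (b - 1))
        (log x * x ^ (t - 1) * (1 - x) ^ (b - 1)) t := by
    filter_upwards [ae_restrict_mem measurableSet_Ioo] with x hx t _
    exact hasDerivAt_betaKernel_left hx.1 b t
  exact (hasDerivAt_integral_of_dominated_loc_of_deriv_le (μ := volume.restrict (Ioo 0 1))
    (F := fun t x ↦ x ^ (t - 1) * (1 - x) ^ (b - 1)) (Metric.ball_mem_nhds a hε)
    (.of_forall fun t ↦ by fun_prop) (integrableOn_betaKernel ha hb) (by fun_prop) h_bound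
    ((integrableOn_betaKernel (half_pos ha) hb).const_mul _) h_diff).2

lemma hasDerivAt_Gamma_mul_Gamma_div_Gamma_add {a b : ℝ} (ha : ∀ m : ℕ, a ≠ -m)
    (hab : ∀ m : ℕ, a + b ≠ -m) :
    HasDerivAt (fun t ↦ Gamma t * Gamma b / Gamma (t + b))
      (Gamma a * Gamma b / Gamma (a + b) * (digamma a - digamma (a + b))) a := by
  have hΓa := (differentiableAt_Gamma ha).hasDerivAt
  have hΓab := (differentiableAt_Gamma hab).hasDerivAt.comp_add_const a b
  refine ((hΓa.mul_const (Gamma b)).div hΓab (Gamma_ne_zero hab)).congr_deriv ?_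
  rw [digamma_eq_deriv_Gamma_div_Gamma ha, digamma_eq_deriv_Gamma_div_Gamma hab]
  field_simp [Gamma_ne_zero ha, Gamma_ne_zero hab]

/-- `∫_{(0,1)} (log x) x^(a−1) (1−x)^(b−1) dx = B(a,b) (ψ(a) − ψ(a+b))`: the expected
log of a Beta(a, b) coordinate, the two-category case of the Dirichlet identity
`E[log θ_j] = Ψ(α̂_j) − Ψ(Σ_i α̂_i)`. -/
theorem integral_log_mul_beta_kernel (a b : ℝ) (ha : 0 < a) (hb : 0 < b) :
    ∫ x in Set.Ioo (0 : ℝ) 1, Real.log x * x ^ (a - 1) * (1 - x) ^ (b - 1) =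
      betaIntegral a b * (digamma a - digamma (a + b)) := by
  have hGamma := hasDerivAt_Gamma_mul_Gamma_div_Gamma_add (ne_neg_natCast_of_pos ha)
    (ne_neg_natCast_of_pos (add_pos ha hb))
  rw [← betaIntegral_eq_Gamma_mul_Gamma_div ha hb] at hGamma
  have hB : (fun t ↦ betaIntegral t b) =ᶠ[nhds a] fun t ↦ Gamma t * Gamma b / Gamma (t + b) := by
    filter_upwards [eventually_gt_nhds ha] with t ht
    exact betaIntegral_eq_Gamma_mul_Gamma_div ht hb
  exact (hasDerivAt_betaIntegral_left ha hb).unique (hGamma.congr_of_eventuallyEq hB)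
end
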